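/- Let λ > 1 be a real algebraic number such that some Galois conjugate of λ lies on the unit circle in ℂ. Then λ cannot be an eigenvalue of any matrix M in the monoid Γ(Ω) generated by Q_i = I + D_iΩ, where Ω is any symmetric nonnegative integer matrix with zero diagonal. -/

import Mathlib

/-!
For a Hermitian `W` with zero diagonal, the form `q(w) = Re (w* W w)` satisfies
`q((I + Dᵢ W) w) = q(w) + 2 |(W w)ᵢ|²`, and `(I + Dᵢ W) w = w` when that increment vanishes.
Hence every `M ∈ Γ(Ω)` weakly increases `q` and fixes each vector on which it preserves `q`.
An eigenvector for an eigenvalue `μ` with `|μ| = 1` has its form preserved, so `μ = 1`.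
As `M` has integer entries, every conjugate of an eigenvalue `λ` is a root of its characteristic
polynomial, hence an eigenvalue; a conjugate on the unit circle is therefore `1`, forcing `λ = 1`.
-/

open Matrix Polynomial

namespace Matrix

variable {n : Type*} [Fintype n]

lemma one_add_single_mul_mulVec [DecidableEq n] {R : Type*} [CommRing R] (W : Matrix n n R)
    (i : n) (v : n → R) : (1 + single i i 1 * W) *ᵥ v = v + Pi.single i ((W *ᵥ v) i) := by
  rw [add_mulVec, one_mulVec, ← mulVec_mulVec, single_mulVec_eq, one_mul, ← Pi.single_smul',
    smul_eq_mul, mul_one]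

lemma star_add_single_dotProduct_mulVec [DecidableEq n] {R : Type*} [CommRing R] [StarRing R]
    {W : Matrix n n R} (hW : W.IsHermitian) {i : n} (hii : W i i = 0) (v : n → R) (c : R) :
    star (v + Pi.single i c) ⬝ᵥ (W *ᵥ (v + Pi.single i c))
      = star v ⬝ᵥ (W *ᵥ v) + star c * (W *ᵥ v) i + star ((W *ᵥ v) i) * c := by
  have hrow : star v ᵥ* W = star (W *ᵥ v) := by rw [star_mulVec, hW.eq]
  have hii' : (W *ᵥ Pi.single i c) i = 0 := by simp [mulVec, hii]
  rw [mulVec_add, star_add, add_dotProduct, dotProduct_add, dotProduct_add, Pi.star_single,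
    single_dotProduct, single_dotProduct, dotProduct_mulVec (star v) W (Pi.single i c), hrow,
    dotProduct_single, Pi.star_apply, hii', mul_zero, add_zero]
  ring

lemma aeval_charpoly_eq_zero_iff [DecidableEq n] {R L : Type*} [CommRing R] [Field L]
    [Algebra R L] (B : Matrix n n R) (x : L) :
    aeval x B.charpoly = 0 ↔ ∃ v ≠ 0, B.map (algebraMap R L) *ᵥ v = x • v := by
  rw [aeval_def, ← eval_map, ← charpoly_map, eval_charpoly, ← exists_mulVec_eq_zero_iff]
  simp only [sub_mulVec, scalar_apply, diagonal_const_mulVec, sub_eq_zero, eq_comm]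

lemma closure_range_one_add_single_mul_map [DecidableEq n] {R S : Type*} [CommRing R]
    [CommRing S] (f : R →+* S) (Ω : Matrix n n R) :
    Submonoid.closure (Set.range fun i => 1 + single i i 1 * Ω.map f)
      = (Submonoid.closure (Set.range fun i => 1 + single i i 1 * Ω)).map f.mapMatrix := by
  rw [MonoidHom.map_mclosure, ← Set.range_comp]
  congr! with i
  simp [Matrix.map_add, Matrix.map_mul, map_single]

section RCLike

variable {𝕜 : Type*} [RCLike 𝕜]

def hermForm (W : Matrix n n 𝕜) (w : n → 𝕜) : ℝ :=
  RCLike.re (star w ⬝ᵥ (W *ᵥ w))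

lemma hermForm_smul (W : Matrix n n 𝕜) (c : 𝕜) (w : n → 𝕜) :
    hermForm W (c • w) = ‖c‖ ^ 2 * hermForm W w := by
  rw [hermForm, hermForm, mulVec_smul, star_smul, smul_dotProduct, dotProduct_smul, smul_eq_mul,
    smul_eq_mul, ← mul_assoc, RCLike.star_def, RCLike.conj_mul, ← RCLike.ofReal_pow,
    RCLike.re_ofReal_mul]

lemma hermForm_one_add_single_mul_mulVec [DecidableEq n] {W : Matrix n n 𝕜}
    (hW : W.IsHermitian) {i : n} (hii : W i i = 0) (v : n → 𝕜) :
    hermForm W ((1 + single i i 1 * W) *ᵥ v) = hermForm W v + 2 * ‖(W *ᵥ v) i‖ ^ 2 := by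
  rw [hermForm, hermForm, one_add_single_mul_mulVec, star_add_single_dotProduct_mulVec hW hii,
    RCLike.star_def, RCLike.conj_mul, map_add, map_add, ← RCLike.ofReal_pow, RCLike.ofReal_re]
  ring

def formIncreasing [DecidableEq n] (W : Matrix n n 𝕜) : Submonoid (Matrix n n 𝕜) where
  carrier := {M | ∀ w, hermForm W w ≤ hermForm W (M *ᵥ w) ∧
    (hermForm W (M *ᵥ w) = hermForm W w → M *ᵥ w = w)}
  one_mem' w := by simp
  mul_mem' {M N} hM hN w := by
    obtain ⟨hNle, hNfix⟩ := hN w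
    obtain ⟨hMle, -⟩ := hM (N *ᵥ w)
    rw [← mulVec_mulVec]
    refine ⟨hNle.trans hMle, fun heq => ?_⟩
    have hNw : N *ᵥ w = w := hNfix (le_antisymm (heq ▸ hMle) hNle)
    rw [hNw] at heq ⊢
    exact (hM w).2 heq

lemma closure_le_formIncreasing [DecidableEq n] {W : Matrix n n 𝕜} (hW : W.IsHermitian)
    (hdiag : ∀ i, W i i = 0) :
    Submonoid.closure (Set.range fun i => 1 + single i i 1 * W) ≤ formIncreasing W := by
  rw [Submonoid.closure_le]
  rintro _ ⟨i, rfl⟩ w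
  rw [hermForm_one_add_single_mul_mulVec hW (hdiag i)]
  refine ⟨le_add_of_nonneg_right (by positivity), fun heq => ?_⟩
  have : (W *ᵥ w) i = 0 := by simpa using heq
  rw [one_add_single_mul_mulVec, this, Pi.single_zero, add_zero]

lemma eq_one_of_mulVec_eq_smul_of_norm_eq_one [DecidableEq n] {W M : Matrix n n 𝕜}
    (hM : M ∈ formIncreasing W) {μ : 𝕜} (hμ : ‖μ‖ = 1) {w : n → 𝕜} (hw : w ≠ 0)
    (hMw : M *ᵥ w = μ • w) : μ = 1 := by
  have hfix : μ • w = w := by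
    rw [← hMw]
    exact (hM w).2 (by rw [hMw, hermForm_smul, hμ, one_pow, one_mul])
  exact smul_left_injective 𝕜 hw (hfix.trans (one_smul 𝕜 w).symm)

end RCLike

end Matrix

namespace minpoly

variable {K L A : Type*} [Field K] [CommRing L] [CommRing A] [Algebra K L] [Algebra K A] {x : A}

lemma aeval_eq_zero_of_aeval_minpoly_eq_zero {p : K[X]} (hp : Polynomial.aeval x p = 0) {μ : L}
    (hμ : Polynomial.aeval μ (minpoly K x) = 0) : Polynomial.aeval μ p = 0 := by
  obtain ⟨q, rfl⟩ := minpoly.dvd K x hp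
  rw [map_mul, hμ, zero_mul]

lemma eq_algebraMap_of_aeval_algebraMap_eq_zero [Nontrivial L] [IsDomain A]
    (hx : IsIntegral K x) {a : K} (ha : Polynomial.aeval (algebraMap K L a) (minpoly K x) = 0) :
    x = algebraMap K A a := by
  have hmin : minpoly K x = X - C a := by
    rw [eq_of_irreducible_of_monic (irreducible hx) ha (monic hx), eq_X_sub_C]
  simpa [hmin, sub_eq_zero] using minpoly.aeval K x

end minpoly

theorem stmt11 (lam : ℝ) (hlam : 1 < lam) (halg : IsAlgebraic ℚ lam)
    (hconj : ∃ μ : ℂ, ‖μ‖ = 1 ∧ Polynomial.aeval μ (minpoly ℚ lam) = 0) :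
    ∀ (n : ℕ) (Ω : Matrix (Fin n) (Fin n) ℤ), Ωᵀ = Ω → (∀ i j, 0 ≤ Ω i j) →
      (∀ i, Ω i i = 0) →
      ∀ M ∈ Submonoid.closure
        (Set.range fun i : Fin n =>
          (1 : Matrix (Fin n) (Fin n) ℝ) + single i i 1 * (Ω.map Int.cast)),
      ¬ ∃ v : Fin n → ℝ, v ≠ 0 ∧ M *ᵥ v = lam • v := by
  rintro n Ω hsymm - hdiag M hM ⟨v, hv, hMv⟩
  obtain ⟨μ, hμ, hμroot⟩ := hconj
  obtain ⟨N, hN, rfl⟩ := Submonoid.mem_map.1 <|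
    (closure_range_one_add_single_mul_map (Int.castRingHom ℝ) Ω).le hM
  have hlamN : aeval lam (N.charpoly.map (algebraMap ℤ ℚ)) = 0 := by
    rw [aeval_map_algebraMap, aeval_charpoly_eq_zero_iff, algebraMap_int_eq]
    exact ⟨v, hv, hMv⟩
  have hμN : aeval μ N.charpoly = 0 := by
    rw [← aeval_map_algebraMap ℚ]
    exact minpoly.aeval_eq_zero_of_aeval_minpoly_eq_zero hlamN hμroot
  obtain ⟨w, hw, hNw⟩ := (aeval_charpoly_eq_zero_iff N μ).1 hμN
  have hW : (Ω.map (Int.castRingHom ℂ)).IsHermitian :=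
    IsHermitian.ext fun i j => by simp [← congrFun (congrFun hsymm i) j]
  have hNW : N.map (algebraMap ℤ ℂ) ∈ formIncreasing (Ω.map (Int.castRingHom ℂ)) := by
    refine closure_le_formIncreasing hW (fun i => by simp [hdiag i]) ?_
    rw [closure_range_one_add_single_mul_map, algebraMap_int_eq]
    exact Submonoid.mem_map_of_mem _ hN
  obtain rfl := eq_one_of_mulVec_eq_smul_of_norm_eq_one hNW hμ hw hNw
  have hlam1 : lam = algebraMap ℚ ℝ 1 :=
    minpoly.eq_algebraMap_of_aeval_algebraMap_eq_zero (L := ℂ) halg.isIntegral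
      (by rwa [map_one])
  exact hlam.ne' (hlam1.trans (map_one _))
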